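/- Let X₁, ..., Xₙ be negatively correlated binary random variables and X = X₁ + ... + Xₙ. Then for any δ ∈ [0,1], P(X ≤ (1-δ)·E[X]) ≤ exp(-δ²·E[X]/2). -/

import Mathlib

/-!
For `t ≤ 0` and binary `Xᵢ`, `exp (t Xᵢ) = eᵗ + (1 - eᵗ) 𝟙{Xᵢ = 0}` with nonnegative coefficients.
Expanding `exp (t ∑ Xᵢ)` as a product of these and then over subsets `I`, every term is a
nonnegative multiple of `𝟙{Xᵢ = 0 for all i ∈ I}`, so negative correlation of the zero events
bounds the moment generating function by the product of the independent case,
`∏ (1 + (eᵗ - 1) pᵢ) ≤ exp ((eᵗ - 1) E[X])`. Markov's inequality with `eᵗ = 1 - δ`, together with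
`(1 - δ) log (1 - δ) ≥ δ²/2 - δ`, gives the bound.
-/

open MeasureTheory ProbabilityTheory Finset Real

section

variable {Ω : Type*}

section Binary

variable {f : Ω → ℝ} (hf : ∀ ω, f ω = 0 ∨ f ω = 1)
include hf

theorem exp_mul_eq_add_mul_indicator_of_binary (t : ℝ) (ω : Ω) :
    exp (t * f ω) = exp t + (1 - exp t) * {ω | f ω = 0}.indicator 1 ω := by
  rcases hf ω with h | h <;> simp [Set.indicator, h]

variable [MeasurableSpace Ω] {μ : Measure Ω} (hf_meas : Measurable f)
include hf_meas

theorem integrable_of_binary [IsFiniteMeasure μ] : Integrable f μ :=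
  .of_bound hf_meas.aestronglyMeasurable 1 <| ae_of_all _ fun ω => by
    rcases hf ω with h | h <;> simp [h]

theorem integral_eq_measureReal_of_binary :
    ∫ ω, f ω ∂μ = μ.real {ω | f ω = 1} := by
  have : {ω | f ω = 1}.indicator 1 = f := by
    ext ω
    rcases hf ω with h | h <;> simp [Set.indicator, h]
  have h1 : MeasurableSet {ω | f ω = 1} := hf_meas (measurableSet_singleton 1)
  rw [← integral_indicator_one h1, this]

theorem measureReal_eq_zero_of_binary [IsProbabilityMeasure μ] :
    μ.real {ω | f ω = 0} = 1 - ∫ ω, f ω ∂μ := by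
  have : {ω | f ω = 0} = {ω | f ω = 1}ᶜ := by
    ext ω
    rcases hf ω with h | h <;> simp [h]
  have h1 : MeasurableSet {ω | f ω = 1} := hf_meas (measurableSet_singleton 1)
  rw [this, measureReal_compl h1, probReal_univ,
    integral_eq_measureReal_of_binary hf hf_meas]

end Binary

variable [MeasurableSpace Ω] {μ : Measure Ω}

theorem integral_prod_add_mul_indicator_le {ι : Type*} [Fintype ι] [IsFiniteMeasure μ]
    {A : ι → Set Ω} (hA : ∀ i, MeasurableSet (A i))
    (hA_neg : ∀ I : Finset ι, μ (⋂ i ∈ I, A i) ≤ ∏ i ∈ I, μ (A i))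
    {a b : ℝ} (ha : 0 ≤ a) (hb : 0 ≤ b) :
    ∫ ω, ∏ i, (a + b * (A i).indicator 1 ω) ∂μ ≤ ∏ i, (a + b * μ.real (A i)) := by
  classical
  have expand : ∀ x : ι → ℝ, ∏ i, (a + b * x i) = ∑ I, a ^ #Iᶜ * b ^ #I * ∏ i ∈ I, x i := by
    intro x
    simp_rw [add_comm a, Fintype.prod_add, prod_mul_distrib, prod_const]
    exact sum_congr rfl fun _ _ => by ring
  have hmeas (I : Finset ι) : MeasurableSet (⋂ i ∈ I, A i) :=
    I.measurableSet_biInter fun i _ => hA i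
  simp_rw [expand, prod_indicator_apply, prod_const_one]
  rw [integral_finsetSum _ fun I _ => ((integrable_const 1).indicator (hmeas I)).const_mul _]
  gcongr with I
  rw [integral_const_mul, integral_indicator_one (hmeas I)]
  gcongr
  simp only [measureReal_def, ← ENNReal.toReal_prod]
  exact ENNReal.toReal_mono (ENNReal.prod_ne_top fun i _ => measure_ne_top μ _) (hA_neg I)

section NegativelyCorrelated

variable {ι : Type*} [Fintype ι] [IsProbabilityMeasure μ] {X : ι → Ω → ℝ}
  (hX_meas : ∀ i, Measurable (X i)) (hX_bin : ∀ i ω, X i ω = 0 ∨ X i ω = 1)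
  (hX_neg : ∀ I : Finset ι, μ {ω | ∀ i ∈ I, X i ω = 0} ≤ ∏ i ∈ I, μ {ω | X i ω = 0})
include hX_meas hX_bin hX_neg

theorem mgf_sum_le_of_negCorrelated {t : ℝ} (ht : t ≤ 0) :
    mgf (fun ω => ∑ i, X i ω) μ t ≤ exp ((exp t - 1) * ∫ ω, ∑ i, X i ω ∂μ) := by
  have hA (i : ι) : MeasurableSet {ω | X i ω = 0} := hX_meas i (measurableSet_singleton 0)
  have hA_neg (I : Finset ι) :
      μ (⋂ i ∈ I, {ω | X i ω = 0}) ≤ ∏ i ∈ I, μ {ω | X i ω = 0} := by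
    simpa only [Set.ofPred_forall] using hX_neg I
  have hexp : 0 ≤ 1 - exp t := sub_nonneg.mpr (exp_le_one_iff.mpr ht)
  calc mgf (fun ω => ∑ i, X i ω) μ t
      = ∫ ω, ∏ i, (exp t + (1 - exp t) * {ω | X i ω = 0}.indicator 1 ω) ∂μ := by
        simp only [mgf, mul_sum, exp_sum, exp_mul_eq_add_mul_indicator_of_binary (hX_bin _)]
    _ ≤ ∏ i, (exp t + (1 - exp t) * μ.real {ω | X i ω = 0}) :=
        integral_prod_add_mul_indicator_le hA hA_neg (exp_pos t).le hexp
    _ ≤ ∏ i, exp ((exp t - 1) * ∫ ω, X i ω ∂μ) := by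
        refine prod_le_prod (fun i _ => ?_) fun i _ => ?_
        · exact add_nonneg (exp_pos t).le (mul_nonneg hexp measureReal_nonneg)
        · rw [measureReal_eq_zero_of_binary (hX_bin i) (hX_meas i)]
          linarith [add_one_le_exp ((exp t - 1) * ∫ ω, X i ω ∂μ)]
    _ = exp ((exp t - 1) * ∫ ω, ∑ i, X i ω ∂μ) := by
        rw [← exp_sum, ← mul_sum,
          integral_finsetSum _ fun i _ => integrable_of_binary (hX_bin i) (hX_meas i)]

theorem measureReal_sum_le_le_exp_of_negCorrelated {t : ℝ} (ht : t ≤ 0) (c : ℝ) :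
    μ.real {ω | ∑ i, X i ω ≤ c} ≤ exp (-t * c + (exp t - 1) * ∫ ω, ∑ i, X i ω ∂μ) := by
  have hS_nonneg (ω : Ω) : 0 ≤ ∑ i, X i ω :=
    sum_nonneg fun i _ => by rcases hX_bin i ω with h | h <;> simp [h]
  have hint : Integrable (fun ω => exp (t * ∑ i, X i ω)) μ := by
    refine .of_bound (by fun_prop) 1 (ae_of_all _ fun ω => ?_)
    rw [norm_of_nonneg (exp_pos _).le, exp_le_one_iff]
    exact mul_nonpos_of_nonpos_of_nonneg ht (hS_nonneg ω)
  calc μ.real {ω | ∑ i, X i ω ≤ c}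
      ≤ exp (-t * c) * mgf (fun ω => ∑ i, X i ω) μ t := measure_le_le_exp_mul_mgf c ht hint
    _ ≤ exp (-t * c) * exp ((exp t - 1) * ∫ ω, ∑ i, X i ω ∂μ) := by
        gcongr
        exact mgf_sum_le_of_negCorrelated hX_meas hX_bin hX_neg ht
    _ = _ := (exp_add _ _).symm

end NegativelyCorrelated

theorem sq_sub_one_div_two_le_mul_log {y : ℝ} (hy0 : 0 < y) (hy1 : y ≤ 1) :
    (y ^ 2 - 1) / 2 ≤ y * log y := by
  have h := sinh_le_self_iff.mpr (log_nonpos hy0.le hy1)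
  rw [sinh_log hy0] at h
  calc (y ^ 2 - 1) / 2 = y * ((y - y⁻¹) / 2) := by field_simp
    _ ≤ y * log y := by gcongr

end

theorem chernoff_negatively_correlated_general
    {Ω : Type*} [MeasurableSpace Ω] (μ : Measure Ω) [IsProbabilityMeasure μ]
    (n : ℕ) (X : Fin n → Ω → ℝ)
    (hmeas : ∀ i, Measurable (X i))
    (hbin : ∀ i ω, X i ω = 0 ∨ X i ω = 1)
    (hneg0 : ∀ I : Finset (Fin n),
      μ {ω | ∀ i ∈ I, X i ω = 0} ≤ ∏ i ∈ I, μ {ω | X i ω = 0})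
    (δ : ℝ) (hδ0 : 0 ≤ δ) (hδ1 : δ ≤ 1) :
    μ {ω | (∑ i, X i ω) ≤ (1 - δ) * (∫ ω, (∑ i, X i ω) ∂μ)}
      ≤ ENNReal.ofReal
          (Real.exp (-δ ^ 2 * (∫ ω, (∑ i, X i ω) ∂μ) / 2)) := by
  set m := ∫ ω, ∑ i, X i ω ∂μ
  have hm : 0 ≤ m := integral_nonneg fun ω =>
    sum_nonneg fun i _ => by rcases hbin i ω with h | h <;> simp [h]
  have tail {t : ℝ} (ht : t ≤ 0) := measureReal_sum_le_le_exp_of_negCorrelated hmeas hbin hneg0 ht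
  rw [← ofReal_measureReal]
  gcongr
  rcases hδ1.lt_or_eq with hδlt | rfl
  · -- the optimal parameter `t = log (1 - δ)`
    have hpos : 0 < 1 - δ := by linarith
    refine (tail (log_nonpos hpos.le (by linarith)) _).trans ?_
    rw [exp_log hpos]
    gcongr
    nlinarith [mul_le_mul_of_nonneg_right (sq_sub_one_div_two_le_mul_log hpos (by linarith)) hm]
  · -- for `δ = 1` the optimal parameter is `-∞`; `t = log 2⁻¹` already suffices
    refine (tail (t := log 2⁻¹) (log_nonpos (by norm_num) (by norm_num)) _).trans ?_
    rw [exp_log (by norm_num)]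
    gcongr
    linarith

/-- Multiplicative Chernoff lower-tail bound for sums of negatively correlated
binary random variables. -/
theorem chernoff_negatively_correlated
    {Ω : Type*} [MeasurableSpace Ω] (μ : Measure Ω) [IsProbabilityMeasure μ]
    (n : ℕ) (X : Fin n → Ω → ℝ)
    (hmeas : ∀ i, Measurable (X i))
    (hbin : ∀ i ω, X i ω = 0 ∨ X i ω = 1)
    (hneg0 : ∀ I : Finset (Fin n),
      μ {ω | ∀ i ∈ I, X i ω = 0} ≤ ∏ i ∈ I, μ {ω | X i ω = 0})
    (hneg1 : ∀ I : Finset (Fin n),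
      μ {ω | ∀ i ∈ I, X i ω = 1} ≤ ∏ i ∈ I, μ {ω | X i ω = 1})
    (δ : ℝ) (hδ0 : 0 ≤ δ) (hδ1 : δ ≤ 1) :
    μ {ω | (∑ i, X i ω) ≤ (1 - δ) * (∫ ω, (∑ i, X i ω) ∂μ)}
      ≤ ENNReal.ofReal
          (Real.exp (-δ ^ 2 * (∫ ω, (∑ i, X i ω) ∂μ) / 2)) :=
  chernoff_negatively_correlated_general μ n X hmeas hbin hneg0 δ hδ0 hδ1
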